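/- arXiv:2401.16357 — 2 statements merged into one kernel-verified Lean document; each statement's English description precedes it below -/
import Mathlib

section
/- For s ∈ B(u) and t ∈ B(w), the vertices s and t lie in the same connected component of F_β (i.e. s and t are joined by a path in F_β) if and only if there exist j, k ∈ ℕ with β^[j](s) = β^[k](t). -/
open Function

/-- The forest `F_β`: two distinct elements `a, b` are adjacent iff both lie in some
bag and one is the image of the other under `β`. -/
def forestF {ι S : Type*} (B : ι → Set S) (β : S → S) : SimpleGraph S :=
  SimpleGraph.fromRel
    (fun a b => (a ∈ ⋃ v, B v) ∧ (b ∈ ⋃ v, B v) ∧ b = β a)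

variable {ι S : Type*}

theorem SimpleGraph.Reachable.exists_iterate_eq_iterate {V : Type*} {G : SimpleGraph V}
    {f : V → V} (hG : ∀ a b, G.Adj a b → b = f a ∨ a = f b) {s t : V}
    (h : G.Reachable s t) :
    ∃ j k : ℕ, f^[j] s = f^[k] t := by
  obtain ⟨p⟩ := h
  induction p with
  | nil => exact ⟨0, 0, rfl⟩
  | @cons a b _ hab _ ih =>
    obtain ⟨j, k, hjk⟩ := ih
    rcases hG a b hab with rfl | rfl
    · exact ⟨j + 1, k, by rw [iterate_succ_apply, hjk]⟩
    · exact ⟨j, k + 1, by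
        rw [iterate_succ_apply', ← hjk, ← iterate_succ_apply, iterate_succ_apply']⟩

theorem eq_apply_or_eq_apply_of_forestF_adj {B : ι → Set S} {β : S → S} {a b : S}
    (h : (forestF B β).Adj a b) : b = β a ∨ a = β b := by
  rw [forestF, SimpleGraph.fromRel_adj] at h
  exact h.2.imp (·.2.2) (·.2.2)

theorem forestF_adj_apply {B : ι → Set S} {β : S → S} {x : S} (hx : x ∈ ⋃ v, B v)
    (hβx : β x ∈ ⋃ v, B v) (hne : x ≠ β x) : (forestF B β).Adj x (β x) := by
  rw [forestF, SimpleGraph.fromRel_adj]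
  exact ⟨hne, Or.inl ⟨hx, hβx, rfl⟩⟩

section Bags

variable {next : ι → ι} {B : ι → Set S} {β : S → S}

theorem iterate_mem_bag (hmap : ∀ v, ∀ s ∈ B v, β s ∈ B (next v)) {v : ι} {x : S}
    (hx : x ∈ B v) (n : ℕ) : β^[n] x ∈ B (next^[n] v) := by
  induction n with
  | zero => exact hx
  | succ n ih => simpa only [iterate_succ_apply'] using hmap _ _ ih

/-- Since consecutive bags along an orbit of `next` are distinct and bags are disjoint,
`β` moves every bag element, so each step `y ↦ β y` is an edge of `F_β`. -/
theorem forestF_reachable_iterate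
    (hnext : ∀ (v : ι) (j k : ℕ), next^[j] v = next^[k] v → j = k)
    (hdisj : Pairwise (Disjoint on B)) (hmap : ∀ v, ∀ s ∈ B v, β s ∈ B (next v))
    {v : ι} {x : S} (hx : x ∈ B v) (n : ℕ) : (forestF B β).Reachable x (β^[n] x) := by
  induction n with
  | zero => rfl
  | succ n ih =>
    have hmem : β^[n] x ∈ B (next^[n] v) := iterate_mem_bag hmap hx n
    have hmem' : β (β^[n] x) ∈ B (next^[n + 1] v) := by
      simpa only [iterate_succ_apply'] using hmap _ _ hmem
    have hbags : next^[n] v ≠ next^[n + 1] v := fun h => by simpa using hnext v n (n + 1) h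
    have hne : β^[n] x ≠ β (β^[n] x) := fun h =>
      Set.disjoint_left.1 (hdisj hbags) hmem (h ▸ hmem')
    rw [iterate_succ_apply']
    exact ih.trans (forestF_adj_apply (Set.mem_iUnion_of_mem _ hmem)
      (Set.mem_iUnion_of_mem _ hmem') hne).reachable

end Bags

theorem forestF_reachable_iff_iterates_meet_general (next : ι → ι)
    (hnext : ∀ (v : ι) (j k : ℕ), next^[j] v = next^[k] v → j = k)
    (B : ι → Set S) (hdisj : Pairwise (Disjoint on B))
    (β : S → S) (hmap : ∀ v, ∀ s ∈ B v, β s ∈ B (next v))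
    (u w : ι) (s t : S) (hs : s ∈ B u) (ht : t ∈ B w) :
    (forestF B β).Reachable s t ↔ ∃ j k : ℕ, β^[j] s = β^[k] t := by
  refine ⟨SimpleGraph.Reachable.exists_iterate_eq_iterate
    fun _ _ => eq_apply_or_eq_apply_of_forestF_adj, fun ⟨j, k, hjk⟩ => ?_⟩
  have hs' := forestF_reachable_iterate hnext hdisj hmap hs j
  have ht' := forestF_reachable_iterate hnext hdisj hmap ht k
  exact hs'.trans (hjk ▸ ht'.symm)

/-- Two bag elements `s ∈ B u` and `t ∈ B w` lie in the same connected component of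
`F_β` iff some `β`-iterates of them coincide. -/
theorem forestF_reachable_iff_iterates_meet (next : ι → ι)
    (hnext : ∀ (v : ι) (j k : ℕ), next^[j] v = next^[k] v → j = k)
    (B : ι → Set S) (hdisj : Pairwise (Disjoint on B))
    (β : S → S) (hmap : ∀ v, ∀ s ∈ B v, β s ∈ B (next v))
    (hinj : ∀ v, Set.InjOn β (B v))
    (u w : ι) (s t : S) (hs : s ∈ B u) (ht : t ∈ B w) :
    (forestF B β).Reachable s t ↔ ∃ j k : ℕ, β^[j] s = β^[k] t :=
  forestF_reachable_iff_iterates_meet_general next hnext B hdisj β hmap u w s t hs ht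
end

section
/- For every v ∈ ι, the map from B(v) to the set of connected components of F_β that sends s to the connected component of s is injective; hence the cardinality of B(v) is a lower bound on the number of connected components of F_β. -/
/-!
Reachability in `F_β` only relates points whose forward `β`-orbits meet, since an edge joins `a`
to `β a`. If `β^[m] a = β^[n] b` with `a, b ∈ B v`, the common point lies in the bags
`B (next^[m] v)` and `B (next^[n] v)`; disjointness of the bags and injectivity of the orbit of
`v` force `m = n`, and `β^[m]` is injective on `B v`, so `a = b`.
-/

open Function

variable {ι S : Type*}

namespace Function

def OrbitsMeet {α : Type*} (f : α → α) (a b : α) : Prop :=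
  ∃ m n, f^[m] a = f^[n] b

theorem orbitsMeet_equivalence {α : Type*} (f : α → α) : Equivalence (OrbitsMeet f) where
  refl _ := ⟨0, 0, rfl⟩
  symm := fun ⟨m, n, h⟩ => ⟨n, m, h.symm⟩
  trans := fun {a b c} ⟨m, n, hab⟩ ⟨p, q, hbc⟩ => ⟨p + m, n + q, by
    rw [iterate_add_apply, hab, ← iterate_add_apply, add_comm, iterate_add_apply, hbc,
      ← iterate_add_apply]⟩

end Function

theorem SimpleGraph.Reachable.rel_of_adj_le {V : Type*} {G : SimpleGraph V} {r : V → V → Prop}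
    (hr : Equivalence r) (hadj : G.Adj ≤ r) {a b : V} (h : G.Reachable a b) :
    r a b := by
  rw [SimpleGraph.reachable_iff_reflTransGen] at h
  induction h with
  | refl => exact hr.refl a
  | tail _ hcd ih => exact hr.trans ih (hadj _ _ hcd)

theorem forestF_adj_orbitsMeet {B : ι → Set S} {β : S → S} {a b : S}
    (h : (forestF B β).Adj a b) : OrbitsMeet β a b := by
  rw [forestF, SimpleGraph.fromRel_adj] at h
  rcases h with ⟨_, ⟨_, _, rfl⟩ | ⟨_, _, rfl⟩⟩
  · exact ⟨1, 0, rfl⟩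
  · exact ⟨0, 1, rfl⟩

theorem forestF_reachable_orbitsMeet {B : ι → Set S} {β : S → S} {a b : S}
    (h : (forestF B β).Reachable a b) : OrbitsMeet β a b :=
  h.rel_of_adj_le (orbitsMeet_equivalence β) fun _ _ => forestF_adj_orbitsMeet

section Bags

variable {next : ι → ι} {B : ι → Set S} {β : S → S}

theorem mapsTo_iterate_bag (hmap : ∀ v, Set.MapsTo β (B v) (B (next v))) (m : ℕ) (v : ι) :
    Set.MapsTo β^[m] (B v) (B (next^[m] v)) := by
  induction m with
  | zero => exact Set.mapsTo_id _
  | succ k ih => rw [iterate_succ', iterate_succ']; exact (hmap _).comp ih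

theorem injOn_iterate_bag (hmap : ∀ v, Set.MapsTo β (B v) (B (next v)))
    (hinj : ∀ v, Set.InjOn β (B v)) (m : ℕ) (v : ι) : Set.InjOn β^[m] (B v) := by
  induction m with
  | zero => exact Set.injOn_id _
  | succ k ih => rw [iterate_succ']; exact (hinj _).comp ih (mapsTo_iterate_bag hmap k v)

theorem eq_of_orbitsMeet_of_mem_bag {v : ι} (hv : Injective (next^[·] v))
    (hdisj : Pairwise (Disjoint on B)) (hmap : ∀ v, Set.MapsTo β (B v) (B (next v)))
    (hinj : ∀ v, Set.InjOn β (B v)) {a b : S} (ha : a ∈ B v) (hb : b ∈ B v)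
    (h : OrbitsMeet β a b) : a = b := by
  obtain ⟨m, n, hmn⟩ := h
  have hbags : next^[m] v = next^[n] v := by
    by_contra hne
    exact (hdisj hne).ne_of_mem (mapsTo_iterate_bag hmap m v ha)
      (mapsTo_iterate_bag hmap n v hb) hmn
  obtain rfl := hv hbags
  exact injOn_iterate_bag hmap hinj m v ha hb hmn

end Bags

/-- For every `v`, the map sending `s ∈ B v` to its connected component in `F_β` is
injective; hence the cardinality of `B v` is a lower bound on the number of connected
components of `F_β`. -/
theorem forestF_bag_to_components_injective (next : ι → ι)
    (hnext : ∀ (v : ι) (j k : ℕ), next^[j] v = next^[k] v → j = k)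
    (B : ι → Set S) (hdisj : Pairwise (Disjoint on B))
    (β : S → S) (hmap : ∀ v, ∀ s ∈ B v, β s ∈ B (next v))
    (hinj : ∀ v, Set.InjOn β (B v)) (v : ι) :
    Set.InjOn (fun s => (forestF B β).connectedComponentMk s) (B v) ∧
      Cardinal.mk (B v) ≤ Cardinal.mk ((forestF B β).ConnectedComponent) := by
  have hcomp : Set.InjOn (fun s => (forestF B β).connectedComponentMk s) (B v) :=
    fun a ha b hb h => eq_of_orbitsMeet_of_mem_bag (hnext v) hdisj hmap hinj ha hb
      (forestF_reachable_orbitsMeet (SimpleGraph.ConnectedComponent.eq.mp h))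
  exact ⟨hcomp, Cardinal.mk_le_of_injective hcomp.injective⟩
end
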